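/- arXiv:1201.0518 — 3 statements merged into one kernel-verified Lean document; each statement's English description precedes it below -/
import Mathlib

section
/- Let n ≥ 1 be an integer, let 0 ≤ i ≤ n, let D > 0 be a real number, and let r_1, …, r_n be real numbers with r_j > 0 for 1 ≤ j ≤ i and r_j < 0 for i < j ≤ n. Then the function (x_1,…,x_n) ↦ (∏_{j=1}^n x_j^{r_j}) · (1 − ∑_{j=1}^{i} log x_j + ∑_{k=i+1}^{n} log x_k)^D is integrable on the region { x ∈ (0,∞)^n : x_1 ≤ x_2 ≤ ⋯ ≤ x_i ≤ 1 ≤ x_{i+1} ≤ ⋯ ≤ x_n } with respect to the multiplicative measure ∏_{j=1}^n dx_j/x_j (the measure on (0,∞)^n whose density against n-dimensional Lebesgue measure is ∏_{j=1}^n x_j^{−1}). -/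
/-!
On the region the logarithmic factor equals `1 + ∑ j, |log x_j|`, and
`(1 + ∑ a_j) ^ D ≤ ∏ (1 + a_j) ^ D` for `a_j ≥ 0`, so the integrand is dominated by a product of
one-variable functions `x ^ r_j * (1 + |log x|) ^ D`, restricted to `(0, 1]` for `j < i` and to
`[1, ∞)` for `j ≥ i`. Since `(1 + |log x|) ^ D = O(x ^ (∓|r_j| / 2))` there, each factor is
integrable for `dx / x`, and a product of integrable functions is integrable for the product
measure.
-/

open MeasureTheory Set Real

theorem one_add_sum_le_prod_one_add {ι R : Type*} [CommSemiring R] [PartialOrder R]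
    [IsOrderedRing R] (s : Finset ι) {a : ι → R} (ha : ∀ j ∈ s, 0 ≤ a j) :
    1 + ∑ j ∈ s, a j ≤ ∏ j ∈ s, (1 + a j) := by
  classical
  induction s using Finset.cons_induction with
  | empty => simp
  | cons j s _ ih =>
    rw [Finset.sum_cons, Finset.prod_cons]
    have haj : 0 ≤ a j := ha j (Finset.mem_cons_self j s)
    have hS : 0 ≤ ∑ k ∈ s, a k := Finset.sum_nonneg fun k hk => ha k (Finset.mem_cons_of_mem hk)
    calc 1 + (a j + ∑ k ∈ s, a k) ≤ 1 + (a j + ∑ k ∈ s, a k) + a j * ∑ k ∈ s, a k :=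
          le_add_of_nonneg_right (mul_nonneg haj hS)
      _ = (1 + a j) * (1 + ∑ k ∈ s, a k) := by ring
      _ ≤ (1 + a j) * ∏ k ∈ s, (1 + a k) :=
          mul_le_mul_of_nonneg_left (ih fun k hk => ha k (Finset.mem_cons_of_mem hk))
            (add_nonneg zero_le_one haj)

theorem one_add_sum_rpow_le_prod {ι : Type*} (s : Finset ι) {a : ι → ℝ}
    (ha : ∀ j ∈ s, 0 ≤ a j) {D : ℝ} (hD : 0 ≤ D) :
    (1 + ∑ j ∈ s, a j) ^ D ≤ ∏ j ∈ s, (1 + a j) ^ D := by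
  rw [finsetProd_rpow s _ (fun j hj => by linarith [ha j hj])]
  exact rpow_le_rpow (by linarith [Finset.sum_nonneg ha]) (one_add_sum_le_prod_one_add s ha) hD

theorem sum_abs_eq_neg_sum_filter_add_sum_filter_not {ι : Type*} (s : Finset ι)
    (p : ι → Prop) [DecidablePred p] {a : ι → ℝ} (hp : ∀ j ∈ s, p j → a j ≤ 0)
    (hnp : ∀ j ∈ s, ¬p j → 0 ≤ a j) :
    ∑ j ∈ s, |a j| = -∑ j ∈ s.filter p, a j + ∑ j ∈ s.filter (fun j => ¬p j), a j := by
  rw [← Finset.sum_filter_add_sum_filter_not s p, ← Finset.sum_neg_distrib]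
  congr 1 <;> refine Finset.sum_congr rfl fun j hj => ?_
  · obtain ⟨hjs, hpj⟩ := Finset.mem_filter.1 hj
    exact abs_of_nonpos (hp j hjs hpj)
  · obtain ⟨hjs, hpj⟩ := Finset.mem_filter.1 hj
    exact abs_of_nonneg (hnp j hjs hpj)

/-- The constant comes from `log y ≤ y ^ ε / ε` with `ε = δ / D`. -/
theorem one_add_log_rpow_le {δ D y : ℝ} (hδ : 0 < δ) (hD : 0 < D) (hy : 1 ≤ y) :
    (1 + log y) ^ D ≤ (1 + D / δ) ^ D * y ^ δ := by
  have hε : 0 < δ / D := div_pos hδ hD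
  have hyε : 1 ≤ y ^ (δ / D) := one_le_rpow hy hε.le
  have hlog : log y ≤ D / δ * y ^ (δ / D) :=
    (log_le_rpow_div (zero_le_one.trans hy) hε).trans_eq (by field_simp)
  have hlog' : 1 + log y ≤ (1 + D / δ) * y ^ (δ / D) := by linarith
  calc (1 + log y) ^ D ≤ ((1 + D / δ) * y ^ (δ / D)) ^ D :=
        rpow_le_rpow (by linarith [log_nonneg hy]) hlog' hD.le
    _ = (1 + D / δ) ^ D * y ^ δ := by
        rw [mul_rpow (by positivity) (by positivity), ← rpow_mul (by linarith),
          div_mul_cancel₀ δ hD.ne']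

theorem integrableOn_withDensity_inv_iff {f : ℝ → ℝ} {s : Set ℝ} (hs : MeasurableSet s)
    (hs0 : s ⊆ Ioi 0) :
    IntegrableOn f s (volume.withDensity fun x => ENNReal.ofReal x⁻¹) ↔
      IntegrableOn (fun x => x⁻¹ * f x) s := by
  rw [IntegrableOn, restrict_withDensity hs, integrable_withDensity_iff_integrable_smul'
    (by fun_prop) (ae_of_all _ fun _ => ENNReal.ofReal_lt_top)]
  refine integrable_congr ((ae_restrict_iff' hs).2 (ae_of_all _ fun x hx => ?_))
  simp [ENNReal.toReal_ofReal (inv_nonneg.2 (hs0 hx).le)]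

theorem integrableOn_Ioc_rpow_mul_one_add_abs_log_rpow {r D : ℝ} (hr : 0 < r) (hD : 0 < D) :
    IntegrableOn (fun x => x ^ r * (1 + |log x|) ^ D) (Ioc 0 1)
      (volume.withDensity fun x => ENNReal.ofReal x⁻¹) := by
  rw [integrableOn_withDensity_inv_iff measurableSet_Ioc fun x hx => hx.1]
  have hdom : IntegrableOn (fun x => (1 + D / (r / 2)) ^ D * x ^ (r / 2 - 1)) (Ioc 0 1) :=
    ((intervalIntegrable_iff_integrableOn_Ioc_of_le zero_le_one).1
      (intervalIntegral.intervalIntegrable_rpow' (by linarith))).const_mul _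
  refine hdom.mono' (by fun_prop) ((ae_restrict_iff' measurableSet_Ioc).2 (ae_of_all _ ?_))
  rintro x ⟨hx0, hx1⟩
  have hlog : |log x| = log x⁻¹ := by rw [log_inv, abs_of_nonpos (log_nonpos hx0.le hx1)]
  have hbound := one_add_log_rpow_le (half_pos hr) hD (one_le_inv₀ hx0 |>.2 hx1)
  rw [← hlog, inv_rpow hx0.le] at hbound
  rw [norm_of_nonneg (by positivity)]
  calc x⁻¹ * (x ^ r * (1 + |log x|) ^ D)
      ≤ x⁻¹ * (x ^ r * ((1 + D / (r / 2)) ^ D * (x ^ (r / 2))⁻¹)) := by gcongr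
    _ = (1 + D / (r / 2)) ^ D * x ^ (r / 2 - 1) := by
        rw [show r / 2 - 1 = r + -(r / 2) - 1 by ring, rpow_sub_one hx0.ne', rpow_add hx0,
          rpow_neg hx0.le]
        ring

theorem integrableOn_Ici_rpow_mul_one_add_abs_log_rpow {r D : ℝ} (hr : r < 0) (hD : 0 < D) :
    IntegrableOn (fun x => x ^ r * (1 + |log x|) ^ D) (Ici 1)
      (volume.withDensity fun x => ENNReal.ofReal x⁻¹) := by
  rw [integrableOn_withDensity_inv_iff measurableSet_Ici fun x hx =>
    mem_Ioi.2 (zero_lt_one.trans_le hx)]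
  have hdom : IntegrableOn (fun x => (1 + D / (-r / 2)) ^ D * x ^ (r / 2 - 1)) (Ici 1) :=
    ((integrableOn_Ici_iff_integrableOn_Ioi (by simp)).2
      (integrableOn_Ioi_rpow_of_lt (by linarith) zero_lt_one)).const_mul _
  refine hdom.mono' (by fun_prop) ((ae_restrict_iff' measurableSet_Ici).2 (ae_of_all _ ?_))
  intro x hx
  have hx0 : 0 < x := zero_lt_one.trans_le hx
  have hbound := one_add_log_rpow_le (by linarith : 0 < -r / 2) hD hx
  rw [← abs_of_nonneg (log_nonneg hx)] at hbound
  rw [norm_of_nonneg (by positivity)]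
  calc x⁻¹ * (x ^ r * (1 + |log x|) ^ D)
      ≤ x⁻¹ * (x ^ r * ((1 + D / (-r / 2)) ^ D * x ^ (-r / 2))) := by gcongr
    _ = (1 + D / (-r / 2)) ^ D * x ^ (r / 2 - 1) := by
        rw [show r / 2 - 1 = r + -r / 2 - 1 by ring, rpow_sub_one hx0.ne', rpow_add hx0]
        ring

/-- Coordinate `j` of a point of the region lies in this interval, on which `log` has constant
sign. -/
def logSignInterval (i j : ℕ) : Set ℝ := if j < i then Ioc 0 1 else Ici 1

section logSignInterval

variable {i j : ℕ} {x : ℝ}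

theorem measurableSet_logSignInterval : MeasurableSet (logSignInterval i j) := by
  unfold logSignInterval; split_ifs <;> measurability

theorem pos_of_mem_logSignInterval (hx : x ∈ logSignInterval i j) : 0 < x := by
  unfold logSignInterval at hx; split_ifs at hx
  exacts [hx.1, zero_lt_one.trans_le hx]

theorem log_nonpos_of_mem_logSignInterval (hx : x ∈ logSignInterval i j) (hj : j < i) :
    log x ≤ 0 := by
  simp only [logSignInterval, hj, if_true] at hx
  exact log_nonpos hx.1.le hx.2

theorem log_nonneg_of_mem_logSignInterval (hx : x ∈ logSignInterval i j) (hj : ¬j < i) :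
    0 ≤ log x := by
  simp only [logSignInterval, hj, if_false] at hx
  exact log_nonneg hx

theorem integrable_indicator_logSignInterval {r D : ℝ} (hD : 0 < D) (hpos : j < i → 0 < r)
    (hneg : i ≤ j → r < 0) :
    Integrable ((logSignInterval i j).indicator fun x => x ^ r * (1 + |log x|) ^ D)
      (volume.withDensity fun x => ENNReal.ofReal x⁻¹) := by
  rw [integrable_indicator_iff measurableSet_logSignInterval]
  by_cases hj : j < i
  · simpa [logSignInterval, hj] using integrableOn_Ioc_rpow_mul_one_add_abs_log_rpow (hpos hj) hD
  · simpa [logSignInterval, hj] using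
      integrableOn_Ici_rpow_mul_one_add_abs_log_rpow (hneg (not_lt.1 hj)) hD

end logSignInterval

theorem one_sub_sum_log_add_sum_log_eq {n i : ℕ} {x : Fin n → ℝ}
    (hx : ∀ j : Fin n, x j ∈ logSignInterval i j) :
    1 - (∑ j ∈ Finset.univ.filter fun j : Fin n => (j : ℕ) < i, log (x j))
      + ∑ j ∈ Finset.univ.filter fun j : Fin n => i ≤ (j : ℕ), log (x j)
      = 1 + ∑ j, |log (x j)| := by
  have := sum_abs_eq_neg_sum_filter_add_sum_filter_not Finset.univ (fun j : Fin n => (j : ℕ) < i)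
    (fun j _ => log_nonpos_of_mem_logSignInterval (hx j))
    (fun j _ => log_nonneg_of_mem_logSignInterval (hx j))
  simp only [not_lt] at this
  rw [this]
  ring

theorem stmt0_general (n : ℕ) (i : ℕ) (D : ℝ) (hD : 0 < D)
    (r : Fin n → ℝ) (hrpos : ∀ j : Fin n, (j : ℕ) < i → 0 < r j)
    (hrneg : ∀ j : Fin n, i ≤ (j : ℕ) → r j < 0) :
    IntegrableOn
      (fun x : Fin n → ℝ =>
        (∏ j : Fin n, x j ^ r j) *
          (1 - (∑ j ∈ Finset.univ.filter fun j : Fin n => (j : ℕ) < i, Real.log (x j))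
             + ∑ j ∈ Finset.univ.filter fun j : Fin n => i ≤ (j : ℕ), Real.log (x j)) ^ D)
      {x : Fin n → ℝ | (∀ j, 0 < x j) ∧ (∀ j k : Fin n, j ≤ k → x j ≤ x k) ∧
        (∀ j : Fin n, (j : ℕ) < i → x j ≤ 1) ∧ ∀ j : Fin n, i ≤ (j : ℕ) → 1 ≤ x j}
      (Measure.pi fun _ : Fin n => volume.withDensity fun x : ℝ => ENNReal.ofReal x⁻¹) := by
  have hsub : {x : Fin n → ℝ | (∀ j, 0 < x j) ∧ (∀ j k : Fin n, j ≤ k → x j ≤ x k) ∧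
      (∀ j : Fin n, (j : ℕ) < i → x j ≤ 1) ∧ ∀ j : Fin n, i ≤ (j : ℕ) → 1 ≤ x j} ⊆
      univ.pi fun j : Fin n => logSignInterval i j := by
    rintro x ⟨hpos, -, hle, hge⟩ j -
    by_cases hj : (j : ℕ) < i
    · simpa [logSignInterval, hj] using ⟨hpos j, hle j hj⟩
    · simpa [logSignInterval, hj] using hge j (not_lt.1 hj)
  have hbox : MeasurableSet (univ.pi fun j : Fin n => logSignInterval i j) :=
    MeasurableSet.univ_pi fun _ => measurableSet_logSignInterval
  refine IntegrableOn.mono_set ?_ hsub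
  refine (Integrable.fintype_prod fun j => integrable_indicator_logSignInterval hD (hrpos j)
    (hrneg j)).integrableOn.mono' (by fun_prop)
    ((ae_restrict_iff' hbox).2 (ae_of_all _ fun x hx => ?_))
  have hxI : ∀ j : Fin n, x j ∈ logSignInterval i j := fun j => hx j (mem_univ j)
  have hprod : 0 ≤ ∏ j, x j ^ r j :=
    Finset.prod_nonneg fun j _ => rpow_nonneg (pos_of_mem_logSignInterval (hxI j)).le _
  calc _ = (∏ j, x j ^ r j) * (1 + ∑ j, |log (x j)|) ^ D := by
        rw [one_sub_sum_log_add_sum_log_eq hxI,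
          norm_of_nonneg (mul_nonneg hprod (rpow_nonneg (by positivity) _))]
    _ ≤ (∏ j, x j ^ r j) * ∏ j, (1 + |log (x j)|) ^ D :=
        mul_le_mul_of_nonneg_left (one_add_sum_rpow_le_prod _ (fun j _ => abs_nonneg _) hD.le) hprod
    _ = _ := by
        rw [← Finset.prod_mul_distrib]
        exact Finset.prod_congr rfl fun j _ =>
          (indicator_of_mem (hxI j) fun y => y ^ r j * (1 + |log y|) ^ D).symm

/-- Lemma 2.2 of the paper: the basic calculus convergence lemma.  The function
`x ↦ (∏ j x_j^{r_j}) (1 - ∑_{j<i} log x_j + ∑_{k≥i} log x_k)^D` is integrable on the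
region `x_1 ≤ ⋯ ≤ x_i ≤ 1 ≤ x_{i+1} ≤ ⋯ ≤ x_n` of `(0,∞)^n` with respect to the
multiplicative Haar measure `∏ dx_j / x_j`. -/
theorem stmt0 (n : ℕ) (hn : 1 ≤ n) (i : ℕ) (hi : i ≤ n) (D : ℝ) (hD : 0 < D)
    (r : Fin n → ℝ) (hrpos : ∀ j : Fin n, (j : ℕ) < i → 0 < r j)
    (hrneg : ∀ j : Fin n, i ≤ (j : ℕ) → r j < 0) :
    IntegrableOn
      (fun x : Fin n → ℝ =>
        (∏ j : Fin n, x j ^ r j) *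
          (1 - (∑ j ∈ Finset.univ.filter fun j : Fin n => (j : ℕ) < i, Real.log (x j))
             + ∑ j ∈ Finset.univ.filter fun j : Fin n => i ≤ (j : ℕ), Real.log (x j)) ^ D)
      {x : Fin n → ℝ | (∀ j, 0 < x j) ∧ (∀ j k : Fin n, j ≤ k → x j ≤ x k) ∧
        (∀ j : Fin n, (j : ℕ) < i → x j ≤ 1) ∧ ∀ j : Fin n, i ≤ (j : ℕ) → 1 ≤ x j}
      (Measure.pi fun _ : Fin n => volume.withDensity fun x : ℝ => ENNReal.ofReal x⁻¹) :=
  stmt0_general n i D hD r hrpos hrneg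
end

section
/- With notation as in the context (so n = 2m): (i) every g ∈ B_{n+2} that maps V_{n+1} to itself and restricts to an isometry of V_{n+1} extending by the identity (i.e., every element of B_{n+2} ∩ U(V_{n+1})) lies in B_n; and (ii) if η ∈ U(V_{n+1}) satisfies η B_n η^{−1} ∩ B_{n+1} = {1}, then B_{n+2} ∩ η^{−1} B_{n+1} η = {1}. -/
noncomputable section

namespace GrossPrasadEven

/-- The ambient hermitian space `V_{n+2}` (for `n = 2m`), realized as pairs of
coordinate vectors: `e i = (δ_i, 0)` and `f i = (0, δ_i)` for `i : Fin (m+1)`. -/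
abbrev Amb (E : Type) [Field E] (m : ℕ) := (Fin (m + 1) → E) × (Fin (m + 1) → E)

/-- The isotropic basis vector `e_i`. -/
def e (E : Type) [Field E] (m : ℕ) (i : Fin (m + 1)) : Amb E m := (Pi.single i 1, 0)

/-- The isotropic basis vector `f_i`. -/
def f (E : Type) [Field E] (m : ℕ) (i : Fin (m + 1)) : Amb E m := (0, Pi.single i 1)

/-- The hermitian form with `h(e_i, e_j) = h(f_i, f_j) = 0` and `h(e_i, f_j) = δ_{ij}`;
it is `τ`-sesquilinear and satisfies `h(y,x) = τ(h(x,y))` when `τ ∘ τ = id`. -/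
def herm (E : Type) [Field E] (m : ℕ) (τ : E →+* E) (x y : Amb E m) : E :=
  (∑ k, x.1 k * τ (y.2 k)) + ∑ k, x.2 k * τ (y.1 k)

/-- `g` is an isometry of the hermitian form (a member of the unitary group
`U(V_{n+2})`). -/
def IsIsom (E : Type) [Field E] (m : ℕ) (τ : E →+* E)
    (g : Amb E m ≃ₗ[E] Amb E m) : Prop :=
  ∀ x y : Amb E m, herm E m τ (g x) (g y) = herm E m τ x y

/-- The isotropic subspace `⟨e_1, …, e_k⟩` (with `0`-based indexing `i < k`). -/
def Ek (E : Type) [Field E] (m : ℕ) (k : ℕ) : Submodule E (Amb E m) :=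
  Submodule.span E (e E m '' {i : Fin (m + 1) | (i : ℕ) < k})

/-- The subspace `V_n = ⟨e_1, …, e_m, f_1, …, f_m⟩`. -/
def Vn (E : Type) [Field E] (m : ℕ) : Submodule E (Amb E m) :=
  Submodule.span E
    (e E m '' {i : Fin (m + 1) | (i : ℕ) < m} ∪ f E m '' {i : Fin (m + 1) | (i : ℕ) < m})

/-- The subspace `V_{n+1} = V_n ⊕ E·(e_{m+1} + f_{m+1})`. -/
def Vn1 (E : Type) [Field E] (m : ℕ) : Submodule E (Amb E m) :=
  Vn E m ⊔ Submodule.span E {e E m (Fin.last m) + f E m (Fin.last m)}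

/-- The members of the flag `F_{n+2}`: `⟨e_{m+1}, e_1, …, e_k⟩` for `0 ≤ k ≤ m`. -/
def Fk (E : Type) [Field E] (m : ℕ) (k : ℕ) : Submodule E (Amb E m) :=
  Submodule.span E {e E m (Fin.last m)} ⊔ Ek E m k

/-- Membership in `B_n`: an isometry lying in `U(V_n)` (it fixes the orthogonal
complement `⟨e_{m+1}, f_{m+1}⟩` pointwise and preserves `V_n`) stabilizing the flag
`F_n`. -/
def Bn (E : Type) [Field E] (m : ℕ) (τ : E →+* E) (g : Amb E m ≃ₗ[E] Amb E m) : Prop :=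
  IsIsom E m τ g ∧
    g (e E m (Fin.last m)) = e E m (Fin.last m) ∧
    g (f E m (Fin.last m)) = f E m (Fin.last m) ∧
    (Vn E m).map g.toLinearMap = Vn E m ∧
    ∀ k : ℕ, 1 ≤ k → k ≤ m → (Ek E m k).map g.toLinearMap = Ek E m k

/-- Membership in `B_{n+1}`: an isometry lying in `U(V_{n+1})` (it fixes
`e_{m+1} - f_{m+1}` and preserves `V_{n+1}`) stabilizing the flag `F_{n+1}`. -/
def Bn1 (E : Type) [Field E] (m : ℕ) (τ : E →+* E) (g : Amb E m ≃ₗ[E] Amb E m) : Prop :=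
  IsIsom E m τ g ∧
    g (e E m (Fin.last m) - f E m (Fin.last m)) =
      e E m (Fin.last m) - f E m (Fin.last m) ∧
    (Vn1 E m).map g.toLinearMap = Vn1 E m ∧
    ∀ k : ℕ, 1 ≤ k → k ≤ m → (Ek E m k).map g.toLinearMap = Ek E m k

/-- Membership in `B_{n+2}`: an isometry stabilizing the flag `F_{n+2}`. -/
def Bn2 (E : Type) [Field E] (m : ℕ) (τ : E →+* E) (g : Amb E m ≃ₗ[E] Amb E m) : Prop :=
  IsIsom E m τ g ∧ ∀ k : ℕ, k ≤ m → (Fk E m k).map g.toLinearMap = Fk E m k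

/-- Membership in `U(V_{n+1})` inside `U(V_{n+2})`: an isometry mapping `V_{n+1}` to
itself and extending by the identity on the orthogonal complement
`E·(e_{m+1} - f_{m+1})`. -/
def MemUn1 (E : Type) [Field E] (m : ℕ) (τ : E →+* E)
    (g : Amb E m ≃ₗ[E] Amb E m) : Prop :=
  IsIsom E m τ g ∧ (∀ x ∈ Vn1 E m, g x ∈ Vn1 E m) ∧
    g (e E m (Fin.last m) - f E m (Fin.last m)) =
      e E m (Fin.last m) - f E m (Fin.last m)

/-! `V_n` is the orthogonal complement of `⟨e_{m+1}, f_{m+1}⟩`, `V_{n+1}` that of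
`v = e_{m+1} - f_{m+1}`, and `⟨e_1, …, e_k⟩ = F_k ∩ V_{n+1}`. An element `g` of `B_{n+2}`
fixing `v` stabilises the line `F_0 = E e_{m+1}`, so `g e_{m+1} = c e_{m+1}`, and pairing
with `v` gives `c = 1`. Hence `g` fixes `e_{m+1}` and `f_{m+1} = e_{m+1} - v`, so it
preserves `V_n`, `V_{n+1}` and every `⟨e_1, …, e_k⟩`: this is (i). For (ii), `η` and
`η g η⁻¹` fix `v`, hence so does `g`; by (i) `g ∈ B_n`, and the hypothesis on `η` applies
to `b = g`. -/

end GrossPrasadEven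

lemma Submodule.map_equiv_eq_self_of_forall_apply_mem_iff {R M : Type*} [Semiring R]
    [AddCommMonoid M] [Module R M] (g : M ≃ₗ[R] M) (p : Submodule R M)
    (h : ∀ x, g x ∈ p ↔ x ∈ p) : p.map g.toLinearMap = p := by
  ext x
  rw [Submodule.map_equiv_eq_comap_symm, Submodule.mem_comap, ← h, LinearEquiv.coe_coe,
    LinearEquiv.apply_symm_apply]

lemma LinearEquiv.apply_eq_self_of_conj_apply_eq_self {R M : Type*} [Semiring R]
    [AddCommMonoid M] [Module R M] {η g : M ≃ₗ[R] M} {w : M} (hη : η w = w)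
    (h : (η * g * η⁻¹) w = w) : g w = w := by
  have hηinv : η⁻¹ w = w := by rw [LinearEquiv.coe_inv, LinearEquiv.symm_apply_eq, hη]
  apply η.injective
  rwa [hη, ← hηinv, ← LinearEquiv.mul_apply, ← LinearEquiv.mul_apply, hηinv]

namespace GrossPrasadEven

variable {E : Type} [Field E] {m : ℕ}

def efBasis (E : Type) [Field E] (m : ℕ) :
    Module.Basis (Fin (m + 1) ⊕ Fin (m + 1)) E (Amb E m) :=
  (Pi.basisFun E _).prod (Pi.basisFun E _)

lemma efBasis_inl (i : Fin (m + 1)) : efBasis E m (.inl i) = e E m i := by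
  ext <;> simp [efBasis, e]

lemma efBasis_inr (i : Fin (m + 1)) : efBasis E m (.inr i) = f E m i := by
  ext <;> simp [efBasis, f]

lemma mem_span_e_image_union_f_image (s t : Set (Fin (m + 1))) (x : Amb E m) :
    x ∈ Submodule.span E (e E m '' s ∪ f E m '' t) ↔
      (∀ i ∉ s, x.1 i = 0) ∧ ∀ i ∉ t, x.2 i = 0 := by
  have : e E m '' s ∪ f E m '' t = efBasis E m '' (Sum.inl '' s ∪ Sum.inr '' t) := by
    simp [Set.image_union, Set.image_image, efBasis_inl, efBasis_inr]
  rw [this, Module.Basis.mem_span_image]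
  simp only [Set.subset_def, Finset.mem_coe, Finsupp.mem_support_iff, efBasis, Sum.forall,
    Module.Basis.prod_repr_inl, Module.Basis.prod_repr_inr, Pi.basisFun_repr, Set.mem_union,
    Set.mem_image, Sum.inl.injEq, Sum.inr.injEq, reduceCtorEq, exists_eq_right, and_false,
    exists_false, or_false, false_or, ne_eq]
  exact and_congr (forall_congr' fun _ => not_imp_comm) (forall_congr' fun _ => not_imp_comm)

lemma mem_Vn_iff (x : Amb E m) :
    x ∈ Vn E m ↔ x.1 (Fin.last m) = 0 ∧ x.2 (Fin.last m) = 0 := by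
  have hlast (i : Fin (m + 1)) : ¬ (i : ℕ) < m ↔ i = Fin.last m := by
    rw [Fin.ext_iff, Fin.val_last]
    have := i.isLt
    omega
  rw [Vn, mem_span_e_image_union_f_image]
  simp [hlast]

lemma mem_Vn1_iff (x : Amb E m) : x ∈ Vn1 E m ↔ x.1 (Fin.last m) = x.2 (Fin.last m) := by
  constructor
  · intro hx
    obtain ⟨y, hy, z, hz, rfl⟩ := Submodule.mem_sup.1 hx
    obtain ⟨c, rfl⟩ := Submodule.mem_span_singleton.1 hz
    rw [mem_Vn_iff] at hy
    simp [e, f, hy.1, hy.2]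
  · intro hx
    have hVn : x - x.1 (Fin.last m) • (e E m (Fin.last m) + f E m (Fin.last m)) ∈ Vn E m := by
      rw [mem_Vn_iff]
      constructor <;> simp [e, f, ← hx]
    exact Submodule.mem_sup.2 ⟨_, hVn, _,
      Submodule.smul_mem _ _ (Submodule.mem_span_singleton_self _), sub_add_cancel _ _⟩

lemma mem_Fk_iff (k : ℕ) (x : Amb E m) :
    x ∈ Fk E m k ↔
      x.2 = 0 ∧ ∀ i : Fin (m + 1), k ≤ (i : ℕ) → i ≠ Fin.last m → x.1 i = 0 := by
  have : Fk E m k =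
      Submodule.span E (e E m '' ({Fin.last m} ∪ {i | (i : ℕ) < k}) ∪ f E m '' ∅) := by
    rw [Set.image_empty, Set.union_empty, Set.image_union, Set.image_singleton,
      Submodule.span_union, Fk, Ek]
  rw [this, mem_span_e_image_union_f_image]
  simp [funext_iff, not_lt, and_comm]

lemma mem_Ek_iff (k : ℕ) (x : Amb E m) :
    x ∈ Ek E m k ↔ x.2 = 0 ∧ ∀ i : Fin (m + 1), k ≤ (i : ℕ) → x.1 i = 0 := by
  rw [Ek, ← Set.union_empty (e E m '' _), ← Set.image_empty (f E m),
    mem_span_e_image_union_f_image]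
  simp [funext_iff, not_lt, and_comm]

lemma Fk_zero : Fk E m 0 = Submodule.span E {e E m (Fin.last m)} := by
  simp [Fk, Ek]

lemma Ek_eq_Fk_inf_Vn1 {k : ℕ} (hk : k ≤ m) : Ek E m k = Fk E m k ⊓ Vn1 E m := by
  ext x
  rw [mem_Ek_iff, Submodule.mem_inf, mem_Fk_iff, mem_Vn1_iff]
  constructor
  · rintro ⟨h2, h1⟩
    exact ⟨⟨h2, fun i hi _ => h1 i hi⟩, by rw [h1 _ (by simpa using hk), h2]; rfl⟩
  · rintro ⟨⟨h2, h1⟩, hlast⟩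
    refine ⟨h2, fun i hi => ?_⟩
    by_cases hi' : i = Fin.last m
    · rw [hi', hlast, h2]; rfl
    · exact h1 i hi hi'

lemma herm_smul_left (τ : E →+* E) (c : E) (x y : Amb E m) :
    herm E m τ (c • x) y = c * herm E m τ x y := by
  simp [herm, Finset.mul_sum, mul_add, mul_assoc]

lemma herm_e_last (τ : E →+* E) (x : Amb E m) :
    herm E m τ x (e E m (Fin.last m)) = x.2 (Fin.last m) := by
  simp [herm, e, Pi.single_apply, apply_ite τ]

lemma herm_f_last (τ : E →+* E) (x : Amb E m) :
    herm E m τ x (f E m (Fin.last m)) = x.1 (Fin.last m) := by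
  simp [herm, f, Pi.single_apply, apply_ite τ]

lemma herm_e_last_sub_f_last (τ : E →+* E) (x : Amb E m) :
    herm E m τ x (e E m (Fin.last m) - f E m (Fin.last m))
      = x.2 (Fin.last m) - x.1 (Fin.last m) := by
  simp [herm, e, f, Pi.single_apply, apply_ite τ, mul_ite, sub_eq_add_neg, add_comm]

lemma mem_Vn_iff_herm (τ : E →+* E) (x : Amb E m) :
    x ∈ Vn E m ↔
      herm E m τ x (f E m (Fin.last m)) = 0 ∧ herm E m τ x (e E m (Fin.last m)) = 0 := by
  rw [mem_Vn_iff, herm_e_last, herm_f_last]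

lemma mem_Vn1_iff_herm (τ : E →+* E) (x : Amb E m) :
    x ∈ Vn1 E m ↔ herm E m τ x (e E m (Fin.last m) - f E m (Fin.last m)) = 0 := by
  rw [mem_Vn1_iff, herm_e_last_sub_f_last, sub_eq_zero, eq_comm]

namespace IsIsom

variable {τ : E →+* E} {g : Amb E m ≃ₗ[E] Amb E m}

lemma herm_apply_of_apply_eq (hg : IsIsom E m τ g) {w : Amb E m} (hw : g w = w)
    (x : Amb E m) :
    herm E m τ (g x) w = herm E m τ x w := by
  rw [← hg x w, hw]

lemma map_Vn (hg : IsIsom E m τ g) (he : g (e E m (Fin.last m)) = e E m (Fin.last m))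
    (hf : g (f E m (Fin.last m)) = f E m (Fin.last m)) : (Vn E m).map g.toLinearMap = Vn E m :=
  Submodule.map_equiv_eq_self_of_forall_apply_mem_iff g _ fun x => by
    simp only [mem_Vn_iff_herm τ, hg.herm_apply_of_apply_eq he, hg.herm_apply_of_apply_eq hf]

lemma apply_mem_Vn1_iff (hg : IsIsom E m τ g)
    (hv : g (e E m (Fin.last m) - f E m (Fin.last m)) =
      e E m (Fin.last m) - f E m (Fin.last m))
    (x : Amb E m) : g x ∈ Vn1 E m ↔ x ∈ Vn1 E m := by
  simp only [mem_Vn1_iff_herm τ, hg.herm_apply_of_apply_eq hv]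

lemma map_Ek (hg : IsIsom E m τ g)
    (hv : g (e E m (Fin.last m) - f E m (Fin.last m)) =
      e E m (Fin.last m) - f E m (Fin.last m))
    {k : ℕ} (hk : k ≤ m) (hF : (Fk E m k).map g.toLinearMap = Fk E m k) :
    (Ek E m k).map g.toLinearMap = Ek E m k := by
  rw [Ek_eq_Fk_inf_Vn1 hk, Submodule.map_inf _ g.injective, hF,
    Submodule.map_equiv_eq_self_of_forall_apply_mem_iff g _ (hg.apply_mem_Vn1_iff hv)]

lemma apply_e_last (hg : IsIsom E m τ g)
    (hv : g (e E m (Fin.last m) - f E m (Fin.last m)) =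
      e E m (Fin.last m) - f E m (Fin.last m))
    (hF : (Fk E m 0).map g.toLinearMap = Fk E m 0) :
    g (e E m (Fin.last m)) = e E m (Fin.last m) := by
  have hmem : g (e E m (Fin.last m)) ∈ Submodule.span E {e E m (Fin.last m)} := by
    rw [← Fk_zero, ← hF]
    refine Submodule.mem_map_of_mem ?_
    rw [Fk_zero]
    exact Submodule.mem_span_singleton_self _
  obtain ⟨c, hc⟩ := Submodule.mem_span_singleton.1 hmem
  have hherm := hg.herm_apply_of_apply_eq hv (e E m (Fin.last m))
  rw [← hc, herm_smul_left, herm_e_last_sub_f_last] at hherm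
  have hc1 : c = 1 := by simpa [e] using hherm
  rw [← hc, hc1, one_smul]

end IsIsom

lemma bn_of_bn2_of_memUn1 {τ : E →+* E} {g : Amb E m ≃ₗ[E] Amb E m} (hg : Bn2 E m τ g)
    (hgU : MemUn1 E m τ g) : Bn E m τ g := by
  obtain ⟨hiso, hflag⟩ := hg
  obtain ⟨-, -, hv⟩ := hgU
  have he := hiso.apply_e_last hv (hflag 0 m.zero_le)
  have hf : g (f E m (Fin.last m)) = f E m (Fin.last m) := by
    rw [← sub_sub_cancel (e E m (Fin.last m)) (f E m (Fin.last m)), map_sub, he, hv]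
  exact ⟨hiso, he, hf, hiso.map_Vn he hf, fun k _ hk => hiso.map_Ek hv hk (hflag k hk)⟩

lemma memUn1_of_isIsom {τ : E →+* E} {g : Amb E m ≃ₗ[E] Amb E m} (hg : IsIsom E m τ g)
    (hv : g (e E m (Fin.last m) - f E m (Fin.last m)) =
      e E m (Fin.last m) - f E m (Fin.last m)) :
    MemUn1 E m τ g :=
  ⟨hg, fun x => (hg.apply_mem_Vn1_iff hv x).2, hv⟩

theorem stmt1_general (E : Type) [Field E] (τ : E →+* E) (m : ℕ) :
    (∀ g : Amb E m ≃ₗ[E] Amb E m, Bn2 E m τ g → MemUn1 E m τ g → Bn E m τ g) ∧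
    (∀ η : Amb E m ≃ₗ[E] Amb E m, MemUn1 E m τ η →
      (∀ b : Amb E m ≃ₗ[E] Amb E m, Bn E m τ b → Bn1 E m τ (η * b * η⁻¹) → b = 1) →
      ∀ g : Amb E m ≃ₗ[E] Amb E m, Bn2 E m τ g → Bn1 E m τ (η * g * η⁻¹) → g = 1) := by
  refine ⟨fun _ => bn_of_bn2_of_memUn1, fun η hη H g hg hconj => ?_⟩
  have hv := LinearEquiv.apply_eq_self_of_conj_apply_eq_self hη.2.2 hconj.2.1
  exact H g (bn_of_bn2_of_memUn1 hg (memUn1_of_isIsom hg.1 hv)) hconj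

/-- The even case (`n = 2m`) of the paper's Proposition 2.3:
(i) `B_{n+2} ∩ U(V_{n+1}) ⊆ B_n`; and (ii) if `η ∈ U(V_{n+1})` satisfies
`η B_n η⁻¹ ∩ B_{n+1} = {1}`, then `B_{n+2} ∩ η⁻¹ B_{n+1} η = {1}`. -/
theorem stmt1 (E : Type) [Field E] (h2 : (2 : E) ≠ 0) (τ : E →+* E)
    (hτ : ∀ x : E, τ (τ x) = x) (m : ℕ) (hm : 1 ≤ m) :
    (∀ g : Amb E m ≃ₗ[E] Amb E m, Bn2 E m τ g → MemUn1 E m τ g → Bn E m τ g) ∧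
    (∀ η : Amb E m ≃ₗ[E] Amb E m, MemUn1 E m τ η →
      (∀ b : Amb E m ≃ₗ[E] Amb E m, Bn E m τ b → Bn1 E m τ (η * b * η⁻¹) → b = 1) →
      ∀ g : Amb E m ≃ₗ[E] Amb E m, Bn2 E m τ g → Bn1 E m τ (η * g * η⁻¹) → g = 1) :=
  stmt1_general E τ m

end GrossPrasadEven
end
end

section
/- Fix an integer l ≥ 1 and a real number q > 1, and set t := q^{−1/2}. Define the special tuples â := (q^{−l}, q^{−(l−1)}, …, q^{−1}) and b̂ := (q^{−l+1/2}, q^{−l+3/2}, …, q^{−1/2}). Then for all signed permutations w′, w ∈ W_l: if b_A(t; w′·â, w·b̂) ≠ 0, then both w′ and w are the identity element of W_l (i.e., the trivial permutation with no coordinates inverted). Consequently A_A(t; â, b̂) = c_A(t; â, b̂). -/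
/-!
Every entry of `w'·â` and `w·b̂` is a power of `t`: `â` contributes the exponents `±2m` and `b̂`
the exponents `±(2m - 1)`, `1 ≤ m ≤ l`. Hence a factor `1 - t x y` of `b_A` vanishes as soon as
the exponents of `t`, `x`, `y` add up to `0`. If `b_A ≠ 0`, no entry of `b̂` is inverted: an
inverted `t^{-(2m+1)}` forces `t^{2m}` to be inverted, which forces `t^{2m-1}` to be inverted,
and so on down to `t^{-1}`, which kills the factor `1 - t b_j`. Then no entry of `â` is inverted
either, since `t^{-2m}` pairs off with `t^{2m-1}`. With all signs positive, the remaining factors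
give `σ i ≤ τ i < σ (i + 1)` for the underlying permutations, so both are increasing, hence trivial.
-/

noncomputable section

namespace GrossPrasadCaseA

/-- The group `W_l = (ℤ/2)^l ⋊ S_l` of signed permutations, encoded as a pair of a sign
vector and a permutation. -/
abbrev SignedPerm (l : ℕ) := (Fin l → Bool) × Equiv.Perm (Fin l)

/-- The action of a signed permutation on an `l`-tuple: permute and invert marked
coordinates, `((ε,σ)·a)_k = a_{σ⁻¹ k}^{ε_k}`. -/
def sact {l : ℕ} (w : SignedPerm l) (a : Fin l → ℂ) : Fin l → ℂ :=
  fun k => if w.1 k then (a (w.2⁻¹ k))⁻¹ else a (w.2⁻¹ k)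

/-- The numerator `b(Ξ,ξ)⁻¹`-type product of Case A. -/
def bA (l : ℕ) (t : ℂ) (a b : Fin l → ℂ) : ℂ :=
  (∏ j : Fin l, (1 - t * b j)) *
    (∏ p ∈ Finset.univ.filter fun p : Fin l × Fin l => p.1 ≤ p.2,
      ((1 - t * a p.1 * b p.2) * (1 - t * a p.1 * (b p.2)⁻¹))) *
    ∏ p ∈ Finset.univ.filter fun p : Fin l × Fin l => p.2 < p.1,
      ((1 - t * a p.1 * b p.2) * (1 - t * (a p.1)⁻¹ * b p.2))

/-- The factor `d_1(Ξ)` of Case A. -/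
def d1A (l : ℕ) (a : Fin l → ℂ) : ℂ :=
  (∏ i : Fin l, (1 - a i ^ 2)) *
    ∏ p ∈ Finset.univ.filter fun p : Fin l × Fin l => p.1 < p.2,
      ((1 - a p.1 * a p.2) * (1 - a p.1 * (a p.2)⁻¹))

/-- The factor `d_0(ξ)` of Case A. -/
def d0A (l : ℕ) (b : Fin l → ℂ) : ℂ :=
  (∏ i : Fin l, (1 - b i)) *
    ∏ p ∈ Finset.univ.filter fun p : Fin l × Fin l => p.1 < p.2,
      ((1 - b p.1 * b p.2) * (1 - b p.1 * (b p.2)⁻¹))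

/-- `c(Ξ,ξ) = b(Ξ,ξ) / (d_1(Ξ) d_0(ξ))` of Case A. -/
def cA (l : ℕ) (t : ℂ) (a b : Fin l → ℂ) : ℂ :=
  bA l t a b / (d1A l a * d0A l b)

/-- The Weyl-group sum `A_{Ξ,ξ} = ∑_{w',w ∈ W_l} c(w'Ξ, wξ)` of Case A. -/
def AA (l : ℕ) (t : ℂ) (a b : Fin l → ℂ) : ℂ :=
  ∑ w' : SignedPerm l, ∑ w : SignedPerm l, cA l t (sact w' a) (sact w b)

/-- GL-regularity: `a_i a_j ≠ 1` for `i ≤ j` and the `a_i` are pairwise distinct. -/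
def GLRegular (l : ℕ) (a : Fin l → ℂ) : Prop :=
  (∀ i j : Fin l, i ≤ j → a i * a j ≠ 1) ∧ ∀ i j : Fin l, i ≠ j → a i ≠ a j

/-- B-regularity: `b_i ≠ 1`, `b_i b_j ≠ 1` for `i < j`, and the `b_i` are pairwise
distinct. -/
def BRegular (l : ℕ) (b : Fin l → ℂ) : Prop :=
  (∀ i, b i ≠ 1) ∧ (∀ i j : Fin l, i < j → b i * b j ≠ 1) ∧
    ∀ i j : Fin l, i ≠ j → b i ≠ b j

/-- The identity element of the signed permutation group `W_l`. -/
def oneSP (l : ℕ) : SignedPerm l := (fun _ => false, 1)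

/-- The special tuple `Ξ̂ = (q^{-l}, …, q^{-1})`, written in terms of `t = q^{-1/2}`. -/
def ahat (l : ℕ) (t : ℂ) : Fin l → ℂ := fun i => t ^ (2 * (l - (i : ℕ)))

/-- The special tuple `ξ̂ = (q^{-l+1/2}, …, q^{-1/2})`, written in terms of
`t = q^{-1/2}`. -/
def bhat (l : ℕ) (t : ℂ) : Fin l → ℂ := fun i => t ^ (2 * (l - (i : ℕ)) - 1)

def aexp (l : ℕ) (i : Fin l) : ℤ := 2 * (l - i)

def bexp (l : ℕ) (i : Fin l) : ℤ := 2 * (l - i) - 1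

def signedExp {l : ℕ} (w : SignedPerm l) (e : Fin l → ℤ) (k : Fin l) : ℤ :=
  if w.1 k then -e (w.2⁻¹ k) else e (w.2⁻¹ k)

structure AdmissibleExponents {l : ℕ} (α β : Fin l → ℤ) : Prop where
  one_add_ne (j : Fin l) : 1 + β j ≠ 0
  one_add_add_ne (i j : Fin l) : 1 + α i + β j ≠ 0
  one_add_sub_ne (i j : Fin l) : i ≤ j → 1 + α i - β j ≠ 0
  one_sub_add_ne (i j : Fin l) : j < i → 1 - α i + β j ≠ 0

lemma ahat_eq_zpow (l : ℕ) (c : ℂ) : ahat l c = fun i => c ^ aexp l i := by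
  funext i
  have hi := i.isLt
  rw [ahat, aexp, ← zpow_natCast]
  congr 1
  omega

lemma bhat_eq_zpow (l : ℕ) (c : ℂ) : bhat l c = fun i => c ^ bexp l i := by
  funext i
  have hi := i.isLt
  rw [bhat, bexp, ← zpow_natCast]
  congr 1
  omega

lemma sact_zpow {l : ℕ} (w : SignedPerm l) (c : ℂ) (e : Fin l → ℤ) :
    sact w (fun i => c ^ e i) = fun k => c ^ signedExp w e k := by
  funext k
  unfold sact signedExp
  split <;> simp [zpow_neg]

lemma signedExp_apply_perm {l : ℕ} (w : SignedPerm l) (e : Fin l → ℤ) (i : Fin l) :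
    signedExp w e (w.2 i) = if w.1 (w.2 i) then -e i else e i := by
  simp [signedExp]

lemma sact_oneSP {l : ℕ} (a : Fin l → ℂ) : sact (oneSP l) a = a := by
  funext k
  simp [sact, oneSP]

lemma one_add_ne_zero_of_one_sub_mul_zpow_ne_zero {c : ℂ} (hc : c ≠ 0) {x : ℤ}
    (h : 1 - c * c ^ x ≠ 0) : 1 + x ≠ 0 := by
  intro hx
  rw [← zpow_one_add₀ hc, hx, zpow_zero, sub_self] at h
  exact h rfl

lemma one_add_add_ne_zero_of_one_sub_mul_zpow_ne_zero {c : ℂ} (hc : c ≠ 0) {x y : ℤ}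
    (h : 1 - c * c ^ x * c ^ y ≠ 0) : 1 + x + y ≠ 0 := by
  rw [mul_assoc, ← zpow_add₀ hc] at h
  rw [add_assoc]
  exact one_add_ne_zero_of_one_sub_mul_zpow_ne_zero hc h

lemma admissibleExponents_of_bA_ne_zero {l : ℕ} {c : ℂ} (hc : c ≠ 0) {α β : Fin l → ℤ}
    (h : bA l c (fun i => c ^ α i) (fun j => c ^ β j) ≠ 0) : AdmissibleExponents α β := by
  simp only [bA, mul_ne_zero_iff, Finset.prod_ne_zero_iff, Finset.mem_filter,
    Finset.mem_univ, forall_const, true_and, Prod.forall] at h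
  obtain ⟨⟨hb, hle⟩, hlt⟩ := h
  refine ⟨fun j => ?_, fun i j => ?_, fun i j hij => ?_, fun i j hji => ?_⟩
  · exact one_add_ne_zero_of_one_sub_mul_zpow_ne_zero hc (hb j)
  · rcases le_or_gt i j with hij | hji
    · exact one_add_add_ne_zero_of_one_sub_mul_zpow_ne_zero hc (hle i j hij).1
    · exact one_add_add_ne_zero_of_one_sub_mul_zpow_ne_zero hc (hlt i j hji).1
  · have h' := (hle i j hij).2
    rw [← zpow_neg] at h'
    have := one_add_add_ne_zero_of_one_sub_mul_zpow_ne_zero hc h'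
    omega
  · have h' := (hlt i j hji).2
    rw [← zpow_neg, mul_assoc, mul_comm (c ^ (-α i)), ← mul_assoc] at h'
    have := one_add_add_ne_zero_of_one_sub_mul_zpow_ne_zero hc h'
    omega

section Combinatorics

variable {n : ℕ} {w' w : SignedPerm (n + 1)}

lemma signs_bhat_eq_false
    (h : AdmissibleExponents (signedExp w' (aexp (n + 1))) (signedExp w (bexp (n + 1))))
    (i : Fin (n + 1)) : w.1 (w.2 i) = false := by
  induction i using Fin.reverseInduction with
  | last =>
    cases hs : w.1 (w.2 (Fin.last n))
    · rfl
    · refine absurd ?_ (h.one_add_ne (w.2 (Fin.last n)))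
      simp only [signedExp_apply_perm, hs, bexp, ↓reduceIte, Fin.val_last]
      push_cast
      ring
  | cast i ih =>
    cases hs : w.1 (w.2 i.castSucc)
    · rfl
    · refine absurd ?_ (h.one_add_add_ne (w'.2 i.succ) (w.2 i.castSucc))
      cases hs' : w'.1 (w'.2 i.succ)
      · simp only [signedExp_apply_perm, hs, hs', aexp, bexp, ↓reduceIte, Bool.false_eq_true,
          Fin.val_succ, Fin.val_castSucc]
        push_cast
        omega
      · refine absurd ?_ (h.one_add_add_ne (w'.2 i.succ) (w.2 i.succ))
        simp only [signedExp_apply_perm, ih, hs', aexp, bexp, ↓reduceIte, Bool.false_eq_true,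
          Fin.val_succ]
        push_cast
        omega

lemma signs_ahat_eq_false
    (h : AdmissibleExponents (signedExp w' (aexp (n + 1))) (signedExp w (bexp (n + 1))))
    (i : Fin (n + 1)) : w'.1 (w'.2 i) = false := by
  cases hs : w'.1 (w'.2 i)
  · rfl
  · refine absurd ?_ (h.one_add_add_ne (w'.2 i) (w.2 i))
    simp only [signedExp_apply_perm, hs, signs_bhat_eq_false h, aexp, bexp, ↓reduceIte,
      Bool.false_eq_true]
    ring

lemma perm_ahat_le_perm_bhat
    (h : AdmissibleExponents (signedExp w' (aexp (n + 1))) (signedExp w (bexp (n + 1))))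
    (i : Fin (n + 1)) : w'.2 i ≤ w.2 i := by
  by_contra! hlt
  refine h.one_sub_add_ne (w'.2 i) (w.2 i) hlt ?_
  simp only [signedExp_apply_perm, signs_ahat_eq_false h, signs_bhat_eq_false h, aexp, bexp,
    ↓reduceIte, Bool.false_eq_true]
  ring

lemma perm_bhat_lt_perm_ahat_succ
    (h : AdmissibleExponents (signedExp w' (aexp (n + 1))) (signedExp w (bexp (n + 1))))
    (i : Fin n) : w.2 i.castSucc < w'.2 i.succ := by
  by_contra! hle
  refine h.one_add_sub_ne (w'.2 i.succ) (w.2 i.castSucc) hle ?_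
  simp only [signedExp_apply_perm, signs_ahat_eq_false h, signs_bhat_eq_false h, aexp, bexp,
    ↓reduceIte, Bool.false_eq_true, Fin.val_succ, Fin.val_castSucc]
  push_cast
  ring

lemma perms_eq_one
    (h : AdmissibleExponents (signedExp w' (aexp (n + 1))) (signedExp w (bexp (n + 1)))) :
    w'.2 = 1 ∧ w.2 = 1 := by
  have hσ : StrictMono w'.2 := Fin.strictMono_iff_lt_succ.2 fun i =>
    (perm_ahat_le_perm_bhat h _).trans_lt (perm_bhat_lt_perm_ahat_succ h i)
  have hτ : StrictMono w.2 := Fin.strictMono_iff_lt_succ.2 fun i =>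
    (perm_bhat_lt_perm_ahat_succ h i).trans_le (perm_ahat_le_perm_bhat h _)
  exact ⟨Equiv.ext fun _ => hσ.apply_eq, Equiv.ext fun _ => hτ.apply_eq⟩

end Combinatorics

lemma eq_oneSP_of_perm_eq_one {l : ℕ} {w : SignedPerm l} (hs : ∀ i, w.1 (w.2 i) = false)
    (hp : w.2 = 1) : w = oneSP l :=
  Prod.ext (funext fun k => by simpa [hp, oneSP] using hs k) hp

lemma eq_oneSP_of_bA_ne_zero {l : ℕ} {c : ℂ} (hc : c ≠ 0) (w' w : SignedPerm l)
    (h : bA l c (sact w' (ahat l c)) (sact w (bhat l c)) ≠ 0) :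
    w' = oneSP l ∧ w = oneSP l := by
  cases l with
  | zero => exact ⟨Subsingleton.elim _ _, Subsingleton.elim _ _⟩
  | succ n =>
    rw [ahat_eq_zpow, bhat_eq_zpow, sact_zpow, sact_zpow] at h
    have hadm := admissibleExponents_of_bA_ne_zero hc h
    exact ⟨eq_oneSP_of_perm_eq_one (signs_ahat_eq_false hadm) (perms_eq_one hadm).1,
      eq_oneSP_of_perm_eq_one (signs_bhat_eq_false hadm) (perms_eq_one hadm).2⟩

lemma AA_eq_cA_of_bA_ne_zero {l : ℕ} {t : ℂ} {a b : Fin l → ℂ}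
    (h : ∀ w' w, bA l t (sact w' a) (sact w b) ≠ 0 → w' = oneSP l ∧ w = oneSP l) :
    AA l t a b = cA l t a b := by
  have hc : ∀ w' w, ¬(w' = oneSP l ∧ w = oneSP l) → cA l t (sact w' a) (sact w b) = 0 :=
    fun w' w hne => by rw [cA, not_ne_iff.mp (mt (h w' w) hne), zero_div]
  rw [AA, Fintype.sum_eq_single (oneSP l) fun w' hw' =>
      Fintype.sum_eq_zero _ fun w => hc w' w fun he => hw' he.1,
    Fintype.sum_eq_single (oneSP l) fun w hw => hc _ w fun he => hw he.2,
    sact_oneSP, sact_oneSP]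

theorem stmt8_general (l : ℕ) (q : ℝ) (hq : 1 < q) (t : ℂ)
    (ht : t = ((Real.sqrt q)⁻¹ : ℝ)) :
    (∀ w' w : SignedPerm l,
      bA l t (sact w' (ahat l t)) (sact w (bhat l t)) ≠ 0 → w' = oneSP l ∧ w = oneSP l) ∧
    AA l t (ahat l t) (bhat l t) = cA l t (ahat l t) (bhat l t) := by
  have ht0 : t ≠ 0 := by
    rw [ht, Complex.ofReal_ne_zero]
    exact (inv_pos.2 (Real.sqrt_pos.2 (zero_lt_one.trans hq))).ne'
  have hb := eq_oneSP_of_bA_ne_zero (l := l) ht0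
  exact ⟨hb, AA_eq_cA_of_bA_ne_zero hb⟩

/-- The key claim in the evaluation of `A_{Ξ,ξ}` in Case A: at the special point
`(Ξ̂, ξ̂)` every summand with `(w', w) ≠ (1, 1)` has vanishing numerator `b_A`, so only
the identity term survives and `A_A(t; Ξ̂, ξ̂) = c_A(t; Ξ̂, ξ̂)`. -/
theorem stmt8 (l : ℕ) (hl : 1 ≤ l) (q : ℝ) (hq : 1 < q) (t : ℂ)
    (ht : t = ((Real.sqrt q)⁻¹ : ℝ)) :
    (∀ w' w : SignedPerm l,
      bA l t (sact w' (ahat l t)) (sact w (bhat l t)) ≠ 0 → w' = oneSP l ∧ w = oneSP l) ∧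
    AA l t (ahat l t) (bhat l t) = cA l t (ahat l t) (bhat l t) :=
  stmt8_general l q hq t ht

end GrossPrasadCaseA
end
end
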